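/- Dual Bounding Theorem, part (1): let F : ℝ^n → ℝ be differentiable with L-Lipschitz continuous gradient, let μ > 0, b₀, r̲, r̄, q̲, q, q̄ ∈ ℝ^n, A ∈ ℝ^{m×n} with nonzero j-th row a_j, and λ̲, λ, λ̄ ∈ ℝ^m. Assume the first-order conditions μ(q̲ − r̲) + ∇F(r̲) + b₀ + Aᵀλ̲ = 0, ∇F(q) + b₀ + Aᵀλ = 0, and L(q̄ − r̄) + ∇F(r̄) + b₀ + Aᵀλ̄ = 0 hold, that λ̲_l = λ_l = λ̄_l = 0 for every l ≠ j, and that λ_j ≥ 0. Set η = 1/‖a_j‖², H₁ = √η (μ‖q̲‖ + L‖q‖ + (μ + L)‖r̲‖) and H₃ = √η L (‖q̄‖ + ‖q‖ + 2‖r̄‖). Then |λ̲_j − λ_j| ≤ H₁ and |λ̄_j − λ_j| ≤ H₃; consequently max{λ̲_j − H₁, λ̄_j − H₃, 0} ≤ λ_j ≤ min{λ̲_j + H₁, λ̄_j + H₃}. -/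

import Mathlib

open scoped RealInnerProductSpace

/-- `Aᵀ λ = ∑ l, λ_l a_l` where `a_l` is the `l`-th row of `A`, as a Euclidean vector. -/
noncomputable def transMul {m n : ℕ} (A : Matrix (Fin m) (Fin n) ℝ) (lam : Fin m → ℝ) :
    EuclideanSpace ℝ (Fin n) :=
  WithLp.toLp 2 (fun i => ∑ l, lam l * A l i)

/-- The `j`-th row of `A` regarded as a Euclidean vector. -/
noncomputable def rowVec {m n : ℕ} (A : Matrix (Fin m) (Fin n) ℝ) (j : Fin m) :
    EuclideanSpace ℝ (Fin n) :=
  WithLp.toLp 2 (fun i => A j i)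

/-!
Subtracting the stationarity condition of the original problem from that of a model problem
(quadratic coefficient `c`, centre `r`, solution `p`) cancels `b₀` and leaves
`(λ'_j - λ_j) a_j = (∇F(q) - ∇F(r)) - c (p - r)`. Taking norms, the Lipschitz bound on `∇F` and
the triangle inequality give `|λ'_j - λ_j| ‖a_j‖ ≤ c‖p‖ + L‖q‖ + (c + L)‖r‖`, and
`√η = 1/‖a_j‖`.
-/

theorem transMul_eq_smul_rowVec {m n : ℕ} (A : Matrix (Fin m) (Fin n) ℝ) {lam : Fin m → ℝ}
    {j : Fin m} (h : ∀ l, l ≠ j → lam l = 0) : transMul A lam = lam j • rowVec A j := by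
  ext i
  simp only [transMul, rowVec, PiLp.smul_apply, PiLp.toLp_apply, smul_eq_mul]
  exact Finset.sum_eq_single j (fun l _ hl => by rw [h l hl, zero_mul]) (by simp)

section Stationary

variable {E : Type*} [NormedAddCommGroup E] [NormedSpace ℝ E] {g : E → E} {L c s t : ℝ}
  {a b p q r : E}

theorem sub_smul_eq_of_stationary (hmodel : c • (p - r) + g r + b + s • a = 0)
    (horig : g q + b + t • a = 0) : (s - t) • a = (g q - g r) - c • (p - r) := by
  rw [sub_smul]
  linear_combination (norm := module) hmodel - horig

theorem abs_sub_mul_norm_le_of_stationary (hL : 0 ≤ L) (hc : 0 ≤ c)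
    (hlip : ‖g q - g r‖ ≤ L * ‖q - r‖)
    (hmodel : c • (p - r) + g r + b + s • a = 0) (horig : g q + b + t • a = 0) :
    |s - t| * ‖a‖ ≤ c * ‖p‖ + L * ‖q‖ + (c + L) * ‖r‖ := by
  have hqr := norm_sub_le q r
  have hpr := norm_sub_le p r
  calc |s - t| * ‖a‖ = ‖(g q - g r) - c • (p - r)‖ := by
        rw [← sub_smul_eq_of_stationary hmodel horig, norm_smul, Real.norm_eq_abs]
    _ ≤ ‖g q - g r‖ + ‖c • (p - r)‖ := norm_sub_le _ _
    _ ≤ L * ‖q - r‖ + c * ‖p - r‖ := by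
        rw [norm_smul, Real.norm_of_nonneg hc]
        exact add_le_add hlip le_rfl
    _ ≤ L * (‖q‖ + ‖r‖) + c * (‖p‖ + ‖r‖) := by gcongr
    _ = c * ‖p‖ + L * ‖q‖ + (c + L) * ‖r‖ := by ring

theorem abs_sub_le_of_stationary (ha : a ≠ 0) (hL : 0 ≤ L) (hc : 0 ≤ c)
    (hlip : ‖g q - g r‖ ≤ L * ‖q - r‖)
    (hmodel : c • (p - r) + g r + b + s • a = 0) (horig : g q + b + t • a = 0) :
    |s - t| ≤ √(1 / ‖a‖ ^ 2) * (c * ‖p‖ + L * ‖q‖ + (c + L) * ‖r‖) := by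
  have ha' : 0 < ‖a‖ := norm_pos_iff.mpr ha
  rw [one_div, Real.sqrt_inv, Real.sqrt_sq ha'.le, inv_mul_eq_div, le_div_iff₀ ha']
  exact abs_sub_mul_norm_le_of_stationary hL hc hlip hmodel horig

end Stationary

theorem dual_bounding_part_one_general
    (n m : ℕ) (F : EuclideanSpace ℝ (Fin n) → ℝ) (L μ : ℝ) (hL : 0 < L) (hμ : 0 < μ)
    (hlip : ∀ x y : EuclideanSpace ℝ (Fin n),
      ‖gradient F x - gradient F y‖ ≤ L * ‖x - y‖)
    (b0 rlow rup qlow q qup : EuclideanSpace ℝ (Fin n))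
    (A : Matrix (Fin m) (Fin n) ℝ) (j : Fin m) (haj : rowVec A j ≠ 0)
    (lamlow lam lamup : Fin m → ℝ)
    (hstatlow : μ • (qlow - rlow) + gradient F rlow + b0 + transMul A lamlow = 0)
    (hstat : gradient F q + b0 + transMul A lam = 0)
    (hstatup : L • (qup - rup) + gradient F rup + b0 + transMul A lamup = 0)
    (hcs : ∀ l, l ≠ j → lamlow l = 0 ∧ lam l = 0 ∧ lamup l = 0)
    (hlamj : 0 ≤ lam j)
    (η H1 H3 : ℝ)
    (hη : η = 1 / ‖rowVec A j‖ ^ 2)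
    (hH1 : H1 = Real.sqrt η * (μ * ‖qlow‖ + L * ‖q‖ + (μ + L) * ‖rlow‖))
    (hH3 : H3 = Real.sqrt η * (L * (‖qup‖ + ‖q‖ + 2 * ‖rup‖))) :
    |lamlow j - lam j| ≤ H1 ∧ |lamup j - lam j| ≤ H3 ∧
      max (max (lamlow j - H1) (lamup j - H3)) 0 ≤ lam j ∧
      lam j ≤ min (lamlow j + H1) (lamup j + H3) := by
  rw [transMul_eq_smul_rowVec A fun l hl => (hcs l hl).1] at hstatlow
  rw [transMul_eq_smul_rowVec A fun l hl => (hcs l hl).2.1] at hstat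
  rw [transMul_eq_smul_rowVec A fun l hl => (hcs l hl).2.2] at hstatup
  have hlow : |lamlow j - lam j| ≤ H1 := by
    rw [hH1, hη]
    exact abs_sub_le_of_stationary haj hL.le hμ.le (hlip q rlow) hstatlow hstat
  have hup : |lamup j - lam j| ≤ H3 := by
    rw [hH3, hη, show L * (‖qup‖ + ‖q‖ + 2 * ‖rup‖) = L * ‖qup‖ + L * ‖q‖ + (L + L) * ‖rup‖ by
      ring]
    exact abs_sub_le_of_stationary haj hL.le hL.le (hlip q rup) hstatup hstat
  refine ⟨hlow, hup, ?_, ?_⟩ <;> rw [abs_sub_le_iff] at hlow hup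
  · exact max_le (max_le (by linarith) (by linarith)) hlamj
  · exact le_min (by linarith) (by linarith)

/-- Dual Bounding Theorem, part (1): with the stationarity conditions of the lower model,
original, and upper model problems at `(q̲, λ̲)`, `(q, λ)`, `(q̄, λ̄)`, all multiplier
components other than the `j`-th vanishing, `λ_j ≥ 0`, and `η = 1/‖a_j‖²`, setting
`H₁ = √η (μ‖q̲‖ + L‖q‖ + (μ+L)‖r̲‖)` and `H₃ = √η L (‖q̄‖ + ‖q‖ + 2‖r̄‖)`, one has
`|λ̲_j − λ_j| ≤ H₁`, `|λ̄_j − λ_j| ≤ H₃`, and hence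
`max{λ̲_j − H₁, λ̄_j − H₃, 0} ≤ λ_j ≤ min{λ̲_j + H₁, λ̄_j + H₃}`. -/
theorem dual_bounding_part_one
    (n m : ℕ) (F : EuclideanSpace ℝ (Fin n) → ℝ) (L μ : ℝ) (hL : 0 < L) (hμ : 0 < μ)
    (hF : Differentiable ℝ F)
    (hlip : ∀ x y : EuclideanSpace ℝ (Fin n),
      ‖gradient F x - gradient F y‖ ≤ L * ‖x - y‖)
    (b0 rlow rup qlow q qup : EuclideanSpace ℝ (Fin n))
    (A : Matrix (Fin m) (Fin n) ℝ) (j : Fin m) (haj : rowVec A j ≠ 0)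
    (lamlow lam lamup : Fin m → ℝ)
    (hstatlow : μ • (qlow - rlow) + gradient F rlow + b0 + transMul A lamlow = 0)
    (hstat : gradient F q + b0 + transMul A lam = 0)
    (hstatup : L • (qup - rup) + gradient F rup + b0 + transMul A lamup = 0)
    (hcs : ∀ l, l ≠ j → lamlow l = 0 ∧ lam l = 0 ∧ lamup l = 0)
    (hlamj : 0 ≤ lam j)
    (η H1 H3 : ℝ)
    (hη : η = 1 / ‖rowVec A j‖ ^ 2)
    (hH1 : H1 = Real.sqrt η * (μ * ‖qlow‖ + L * ‖q‖ + (μ + L) * ‖rlow‖))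
    (hH3 : H3 = Real.sqrt η * (L * (‖qup‖ + ‖q‖ + 2 * ‖rup‖))) :
    |lamlow j - lam j| ≤ H1 ∧ |lamup j - lam j| ≤ H3 ∧
      max (max (lamlow j - H1) (lamup j - H3)) 0 ≤ lam j ∧
      lam j ≤ min (lamlow j + H1) (lamup j + H3) :=
  dual_bounding_part_one_general n m F L μ hL hμ hlip b0 rlow rup qlow q qup A j haj lamlow lam
    lamup hstatlow hstat hstatup hcs hlamj η H1 H3 hη hH1 hH3
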